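/- arXiv:1707.01472 — 4 statements merged into one kernel-verified Lean document; each statement's English description precedes it below -/
import Mathlib

section
/- For every ε > 0, the map x ∈ M ↦ p_ε(x,·) ∈ 𝓜 is continuous with respect to the weak* topology on 𝓜. -/
open MeasureTheory Metric Set Filter Topology
open scoped ENNReal NNReal

namespace EmpStoch

variable {M : Type*} [MetricSpace M] [MeasurableSpace M] [BorelSpace M]

/-- The Dirac probability measure `δ_x` at a point `x`. -/
noncomputable def diracProb (x : M) : ProbabilityMeasure M :=
  ⟨MeasureTheory.Measure.dirac x, inferInstance⟩

/-- `dstar` is a metric on the space `𝓜` of Borel probability measures which is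
compatible with (i.e. metrizes) the weak* topology. -/
def MetrizesWeakStar (dstar : ProbabilityMeasure M → ProbabilityMeasure M → ℝ) : Prop :=
  (∀ μ ν, dstar μ ν = 0 ↔ μ = ν) ∧
  (∀ μ ν, dstar μ ν = dstar ν μ) ∧
  (∀ μ ν ξ, dstar μ ξ ≤ dstar μ ν + dstar ν ξ) ∧
  (∀ (μ : ProbabilityMeasure M) (s : Set (ProbabilityMeasure M)),
      s ∈ nhds μ ↔ ∃ ρ > (0 : ℝ), {ν | dstar ν μ < ρ} ⊆ s)

/-- `P ε x` is the transition probability `p_ε(x,·)`, i.e. for every `ε > 0`, every `x`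
and every Borel set `A`, `p_ε(x,A) = m(A ∩ B_ε(f x)) / m(B_ε(f x))`. -/
def IsTransitionKernel (f : M → M) (m : Measure M)
    (P : ℝ → M → ProbabilityMeasure M) : Prop :=
  ∀ ε > (0 : ℝ), ∀ (x : M) (A : Set M), MeasurableSet A →
    (P ε x : Measure M) A = m (A ∩ Metric.ball (f x) ε) / m (Metric.ball (f x) ε)

/-- `Lop ε` is the dual transfer operator `L*_ε : 𝓜 → 𝓜`, characterized by
`∫ φ d(L*_ε μ) = ∫ (∫ φ(y) p_ε(x,dy)) dμ(x)` for every continuous `φ`. -/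
def IsDualTransfer (P : ℝ → M → ProbabilityMeasure M)
    (Lop : ℝ → ProbabilityMeasure M → ProbabilityMeasure M) : Prop :=
  ∀ ε > (0 : ℝ), ∀ (μ : ProbabilityMeasure M) (φ : C(M, ℝ)),
    ∫ y, φ y ∂(Lop ε μ : Measure M) = ∫ x, (∫ y, φ y ∂(P ε x : Measure M)) ∂(μ : Measure M)

/-- `S ε n x` is the empiric stochastic probability
`σ_{ε,n,x} = (1/n) ∑_{j=1}^n (L*_ε)^j δ_x`. -/
def IsEmpiricStochastic (Lop : ℝ → ProbabilityMeasure M → ProbabilityMeasure M)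
    (S : ℝ → ℕ → M → ProbabilityMeasure M) : Prop :=
  ∀ ε > (0 : ℝ), ∀ n : ℕ, 1 ≤ n → ∀ x : M,
    (S ε n x : Measure M) =
      (n : ℝ≥0∞)⁻¹ • ∑ j ∈ Finset.range n, ((Lop ε)^[j + 1] (diracProb x) : Measure M)

/-- `S0 n x` is the zero-noise empiric probability `σ_{n,x} = (1/n) ∑_{j=1}^n δ_{f^j x}`. -/
def IsEmpiricZeroNoise (f : M → M) (S0 : ℕ → M → ProbabilityMeasure M) : Prop :=
  ∀ n : ℕ, 1 ≤ n → ∀ x : M,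
    (S0 n x : Measure M) =
      (n : ℝ≥0∞)⁻¹ • ∑ j ∈ Finset.range n, MeasureTheory.Measure.dirac (f^[j + 1] x)

/-- `pω_x`: the set of all weak* limits of convergent subsequences of `(σ_{n,x})_{n ≥ 1}`. -/
def pOmega (S0 : ℕ → M → ProbabilityMeasure M) (x : M) : Set (ProbabilityMeasure M) :=
  {ν | ∃ φ : ℕ → ℕ, StrictMono φ ∧ (∀ i, 1 ≤ φ i) ∧
    Tendsto (fun i => S0 (φ i) x) atTop (nhds ν)}

/-- The strong basin of statistical attraction `A_μ = {x : pω_x = {μ}}`. -/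
def strongBasin (S0 : ℕ → M → ProbabilityMeasure M) (μ : ProbabilityMeasure M) : Set M :=
  {x | pOmega S0 x = {μ}}

/-- The `ρ`-weak basin of statistical attraction
`A^ρ_μ = {x : dist*(pω_x, μ) < ρ}`. -/
def weakBasin (dstar : ProbabilityMeasure M → ProbabilityMeasure M → ℝ)
    (S0 : ℕ → M → ProbabilityMeasure M) (ρ : ℝ) (μ : ProbabilityMeasure M) : Set M :=
  {x | ∃ ν ∈ pOmega S0 x, dstar ν μ < ρ}

/-- The basin of empiric stochastic stability `Â_μ` of a measure `μ`. -/
def empBasin (dstar : ProbabilityMeasure M → ProbabilityMeasure M → ℝ)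
    (S : ℝ → ℕ → M → ProbabilityMeasure M) (μ : ProbabilityMeasure M) : Set M :=
  {x | ∀ ρ > (0 : ℝ), ∃ N : ℕ, ∀ n ≥ N, ∃ ε₀ > (0 : ℝ), ∀ ε : ℝ, 0 < ε → ε ≤ ε₀ →
    dstar (S ε n x) μ < ρ}

/-- `μ` is `f`-invariant: `f_* μ = μ`. -/
def IsInvariant (f : M → M) (μ : ProbabilityMeasure M) : Prop :=
  (μ : Measure M).map f = (μ : Measure M)

/-- An `f`-invariant measure `μ` is physical if its strong basin of statistical
attraction has positive `m`-measure. -/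
def Physical (f : M → M) (m : Measure M) (S0 : ℕ → M → ProbabilityMeasure M)
    (μ : ProbabilityMeasure M) : Prop :=
  IsInvariant f μ ∧ 0 < m (strongBasin S0 μ)

/-- An `f`-invariant measure `μ` is pseudo-physical if all its `ρ`-weak basins of
statistical attraction have positive `m`-measure. -/
def PseudoPhysical (f : M → M) (m : Measure M)
    (dstar : ProbabilityMeasure M → ProbabilityMeasure M → ℝ)
    (S0 : ℕ → M → ProbabilityMeasure M) (μ : ProbabilityMeasure M) : Prop :=
  IsInvariant f μ ∧ ∀ ρ > (0 : ℝ), 0 < m (weakBasin dstar S0 ρ μ)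

/-- A probability measure `μ` is empirically stochastically stable. -/
def EmpStochStable (m : Measure M)
    (dstar : ProbabilityMeasure M → ProbabilityMeasure M → ℝ)
    (S : ℝ → ℕ → M → ProbabilityMeasure M) (μ : ProbabilityMeasure M) : Prop :=
  ∃ A : Set M, MeasurableSet A ∧ 0 < m A ∧
    ∀ ρ > (0 : ℝ), ∃ N : ℕ, ∀ n ≥ N, ∃ ε₀ > (0 : ℝ), ∀ ε : ℝ, 0 < ε → ε ≤ ε₀ →
      ∀ᵐ x ∂m, x ∈ A → dstar (S ε n x) μ < ρ

/-- `μ` is globally empirically stochastically stable: it is empirically stochastically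
stable and its basin `Â_μ` has full `m`-measure. -/
def GloballyEmpStochStable (m : Measure M)
    (dstar : ProbabilityMeasure M → ProbabilityMeasure M → ℝ)
    (S : ℝ → ℕ → M → ProbabilityMeasure M) (μ : ProbabilityMeasure M) : Prop :=
  EmpStochStable m dstar S μ ∧ m (empBasin dstar S μ)ᶜ = 0

/-- `dist*(σ, K) := inf_{μ ∈ K} dist*(σ, μ)` (a minimum when `K` is compact). -/
noncomputable def dstarSet (dstar : ProbabilityMeasure M → ProbabilityMeasure M → ℝ)
    (σ : ProbabilityMeasure M) (K : Set (ProbabilityMeasure M)) : ℝ :=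
  sInf ((fun μ => dstar σ μ) '' K)

/-- The basin of empiric stochastic stability `Â_K` of a set of measures `K`. -/
noncomputable def empBasinSet (dstar : ProbabilityMeasure M → ProbabilityMeasure M → ℝ)
    (S : ℝ → ℕ → M → ProbabilityMeasure M) (K : Set (ProbabilityMeasure M)) : Set M :=
  {x | ∀ ρ > (0 : ℝ), ∃ N : ℕ, ∀ n ≥ N, ∃ ε₀ > (0 : ℝ), ∀ ε : ℝ, 0 < ε → ε ≤ ε₀ →
    dstarSet dstar (S ε n x) K < ρ}

/-- The strong basin of statistical attraction `A_K = {x : pω_x ⊆ K}` of a set `K`. -/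
def strongBasinSet (S0 : ℕ → M → ProbabilityMeasure M)
    (K : Set (ProbabilityMeasure M)) : Set M :=
  {x | pOmega S0 x ⊆ K}

/-- A nonempty weak*-compact set `K` of `f`-invariant measures is empirically
stochastically stable: (a) uniform approximation on a positive-measure set, and
(b) minimality with respect to the basins. -/
noncomputable def EmpStochStableSet (f : M → M) (m : Measure M)
    (dstar : ProbabilityMeasure M → ProbabilityMeasure M → ℝ)
    (S : ℝ → ℕ → M → ProbabilityMeasure M) (K : Set (ProbabilityMeasure M)) : Prop :=
  K.Nonempty ∧ IsCompact K ∧ (∀ μ ∈ K, IsInvariant f μ) ∧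
  (∃ A : Set M, MeasurableSet A ∧ 0 < m A ∧
    ∀ ρ > (0 : ℝ), ∃ N : ℕ, ∀ n ≥ N, ∃ ε₀ > (0 : ℝ), ∀ ε : ℝ, 0 < ε → ε ≤ ε₀ →
      ∀ x ∈ A, dstarSet dstar (S ε n x) K < ρ) ∧
  (∀ K' : Set (ProbabilityMeasure M), K'.Nonempty → IsCompact K' →
    (∀ μ ∈ K', IsInvariant f μ) →
    m (empBasinSet dstar S K \ empBasinSet dstar S K') = 0 → K ⊆ K')

/-- `K` is globally empirically stochastically stable: it is empirically stochastically
stable and its basin `Â_K` has full `m`-measure. -/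
noncomputable def GloballyEmpStochStableSet (f : M → M) (m : Measure M)
    (dstar : ProbabilityMeasure M → ProbabilityMeasure M → ℝ)
    (S : ℝ → ℕ → M → ProbabilityMeasure M) (K : Set (ProbabilityMeasure M)) : Prop :=
  EmpStochStableSet f m dstar S K ∧ m (empBasinSet dstar S K)ᶜ = 0

end EmpStoch

/-!
The transition probability `p_ε(x,·)` is the normalization of the restriction `m|B_ε(f x)`.
Since spheres are `m`-null, for `m`-a.e. `y` the membership `y ∈ B_ε(z)` is locally constant
in `z`, so by dominated convergence `z ↦ m|B_ε(z)` is weakly continuous. Normalization is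
continuous at nonzero finite measures, and composing with the continuous map `f` gives the claim.
-/

theorem Metric.eventually_mem_ball_iff_of_dist_ne {X : Type*} [PseudoMetricSpace X]
    {y z₀ : X} {ε : ℝ} (h : dist y z₀ ≠ ε) :
    ∀ᶠ z in 𝓝 z₀, (y ∈ ball z ε ↔ y ∈ ball z₀ ε) := by
  rcases h.lt_or_gt with hlt | hgt
  · filter_upwards [isOpen_ball.mem_nhds (mem_ball_comm.mp hlt)] with z hz
    simp only [mem_ball_comm.mp hz, hlt, mem_ball]
  · filter_upwards [isClosed_closedBall.isOpen_compl.mem_nhds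
      (show z₀ ∉ closedBall y ε by simpa [dist_comm] using hgt)] with z hz
    have hz' : ε < dist y z := by simpa [dist_comm] using hz
    simp only [mem_ball, hz'.not_gt, hgt.not_gt]

namespace MeasureTheory.FiniteMeasure

theorem tendsto_restrict_of_ae_eventually_mem_iff {Ω γ : Type*} [TopologicalSpace Ω]
    [MeasurableSpace Ω] [OpensMeasurableSpace Ω] {F : Filter γ} [F.IsCountablyGenerated]
    (μ : FiniteMeasure Ω) {s : γ → Set Ω} {t : Set Ω}
    (hs : ∀ i, MeasurableSet (s i)) (ht : MeasurableSet t)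
    (h : ∀ᵐ ω ∂(μ : Measure Ω), ∀ᶠ i in F, (ω ∈ s i ↔ ω ∈ t)) :
    Tendsto (fun i ↦ μ.restrict (s i)) F (𝓝 (μ.restrict t)) := by
  rw [tendsto_iff_forall_integral_tendsto]
  intro φ
  simp only [restrict_measure_eq, ← integral_indicator (hs _), ← integral_indicator ht]
  refine tendsto_integral_filter_of_dominated_convergence (fun _ ↦ ‖φ‖)
    (Eventually.of_forall fun i ↦ φ.continuous.aestronglyMeasurable.indicator (hs i))
    (Eventually.of_forall fun i ↦ ae_of_all _ fun ω ↦
      (norm_indicator_le_norm_self φ ω).trans (φ.norm_coe_le_norm ω))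
    (integrable_const _) ?_
  filter_upwards [h] with ω hω
  refine tendsto_const_nhds.congr' ?_
  filter_upwards [hω] with i hi
  exact indicator_eq_indicator hi.symm rfl

theorem continuous_restrict_ball {X : Type*} [PseudoMetricSpace X] [MeasurableSpace X]
    [OpensMeasurableSpace X] (μ : FiniteMeasure X) {ε : ℝ}
    (hsph : ∀ z, (μ : Measure X) (sphere z ε) = 0) :
    Continuous fun z ↦ μ.restrict (ball z ε) := by
  refine continuous_iff_continuousAt.mpr fun z₀ ↦
    μ.tendsto_restrict_of_ae_eventually_mem_iff (fun _ ↦ measurableSet_ball) measurableSet_ball ?_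
  filter_upwards [measure_eq_zero_iff_ae_notMem.mp (hsph z₀)] with y hy
  exact eventually_mem_ball_iff_of_dist_ne hy

end MeasureTheory.FiniteMeasure

namespace EmpStoch

variable {M : Type*} [MetricSpace M] [MeasurableSpace M]
  {f : M → M} {μ : FiniteMeasure M} {P : ℝ → M → ProbabilityMeasure M} {ε : ℝ}

theorem IsTransitionKernel.restrict_ball_ne_zero (hP : IsTransitionKernel f μ P) (hε : 0 < ε)
    (x : M) : μ.restrict (ball (f x) ε) ≠ 0 := by
  rw [Ne, FiniteMeasure.restrict_eq_zero_iff, ← ENNReal.coe_eq_zero,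
    FiniteMeasure.ennreal_coeFn_eq_coeFn_toMeasure]
  intro h0
  simpa [h0] using hP ε hε x univ MeasurableSet.univ

theorem IsTransitionKernel.eq_normalize_restrict_ball [Nonempty M]
    (hP : IsTransitionKernel f μ P) (hε : 0 < ε) (x : M) :
    P ε x = (μ.restrict (ball (f x) ε)).normalize := by
  have hne := hP.restrict_ball_ne_zero hε x
  have hball : μ (ball (f x) ε) ≠ 0 := (μ.restrict_nonzero_iff _).mp hne
  apply ProbabilityMeasure.toMeasure_injective
  ext s hs
  rw [FiniteMeasure.toMeasure_normalize_eq_of_nonzero _ hne, hP ε hε x s hs, Measure.smul_apply,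
    FiniteMeasure.restrict_measure_eq, Measure.restrict_apply hs, FiniteMeasure.restrict_mass,
    ENNReal.smul_def, smul_eq_mul, ENNReal.coe_inv hball,
    FiniteMeasure.ennreal_coeFn_eq_coeFn_toMeasure, ENNReal.div_eq_inv_mul]

theorem statement_0_general {M : Type*} [MetricSpace M] [MeasurableSpace M]
    [BorelSpace M] (f : M → M) (hf : Continuous f)
    (m : Measure M) [IsFiniteMeasure m]
    (hsph : ∀ (z : M) (r : ℝ), m (Metric.sphere z r) = 0)
    (P : ℝ → M → ProbabilityMeasure M) (hP : IsTransitionKernel f m P) :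
    ∀ ε > (0 : ℝ), Continuous fun x : M => P ε x := by
  intro ε hε
  let μ : FiniteMeasure M := ⟨m, ‹_›⟩
  have hPμ : IsTransitionKernel f μ P := hP
  refine continuous_iff_continuousAt.mpr fun x ↦ ?_
  have : Nonempty M := ⟨x⟩
  have hrestrict := (FiniteMeasure.continuous_restrict_ball μ (hsph · ε)).comp hf
  simp only [ContinuousAt, hPμ.eq_normalize_restrict_ball hε]
  exact FiniteMeasure.tendsto_normalize_of_tendsto (hrestrict.tendsto x)
    (hPμ.restrict_ball_ne_zero hε x)

theorem statement_0 {M : Type*} [MetricSpace M] [CompactSpace M] [MeasurableSpace M]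
    [BorelSpace M] (f : M → M) (hf : Continuous f)
    (m : Measure M) [IsFiniteMeasure m]
    (hball : ∀ (z : M) (r : ℝ), 0 < r → 0 < m (Metric.ball z r))
    (hsph : ∀ (z : M) (r : ℝ), m (Metric.sphere z r) = 0)
    (P : ℝ → M → ProbabilityMeasure M) (hP : IsTransitionKernel f m P) :
    ∀ ε > (0 : ℝ), Continuous fun x : M => P ε x :=
  statement_0_general f hf m hsph P hP

end EmpStoch
end

section
/- For every ε > 0, the dual transfer operator L*_ε : 𝓜 → 𝓜 is continuous with respect to the weak* topology on 𝓜. -/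
open MeasureTheory Metric Set Filter Topology
open scoped ENNReal NNReal

namespace EmpStoch

variable {M : Type*} [MetricSpace M] [MeasurableSpace M] [BorelSpace M]

/-! Since `p_ε(x,·)` is `m` restricted to `B_ε(f x)` and normalized, and spheres are `m`-null,
dominated convergence makes `x ↦ ∫ φ dp_ε(x,·)` continuous for every continuous `φ`: the kernel
is Feller. Then `∫ φ d(L*_ε μ) = ∫ g dμ` with `g` continuous, which is weak*-continuous in `μ`. -/

theorem continuous_setIntegral_ball {X : Type*} [PseudoMetricSpace X] [MeasurableSpace X]
    [OpensMeasurableSpace X] {m : Measure X} {φ : X → ℝ} (hφ : Integrable φ m) {ε : ℝ}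
    (hsph : ∀ z, m (sphere z ε) = 0) :
    Continuous fun z => ∫ y in ball z ε, φ y ∂m := by
  simp_rw [← integral_indicator measurableSet_ball]
  refine continuous_iff_continuousAt.2 fun z₀ => continuousAt_of_dominated (bound := (‖φ ·‖))
    (.of_forall fun _ => hφ.aestronglyMeasurable.indicator measurableSet_ball)
    (.of_forall fun _ => .of_forall fun _ => norm_indicator_le_norm_self _ _) hφ.norm ?_
  filter_upwards [measure_eq_zero_iff_ae_notMem.mp (hsph z₀)] with a ha
  have hfront : z₀ ∉ frontier (ball a ε) := fun h =>
    ha (mem_sphere_comm.1 (frontier_ball_subset_sphere h))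
  have hswap : (fun z => (ball z ε).indicator φ a) = (ball a ε).indicator fun _ => φ a := by
    ext z
    classical
    simp only [indicator_apply, mem_ball_comm (x := a)]
  rw [hswap]
  exact continuousOn_const.continuousAt_indicator hfront

theorem continuous_measureReal_ball {X : Type*} [PseudoMetricSpace X] [MeasurableSpace X]
    [OpensMeasurableSpace X] {m : Measure X} [IsFiniteMeasure m] {ε : ℝ}
    (hsph : ∀ z, m (sphere z ε) = 0) :
    Continuous fun z => m.real (ball z ε) := by
  simpa using continuous_setIntegral_ball (integrable_const (1 : ℝ)) hsph

omit [BorelSpace M] in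
theorem IsTransitionKernel.toMeasure_eq {f : M → M} {m : Measure M}
    {P : ℝ → M → ProbabilityMeasure M} (hP : IsTransitionKernel f m P) {ε : ℝ} (hε : 0 < ε)
    (x : M) :
    (P ε x : Measure M) = (m (ball (f x) ε))⁻¹ • m.restrict (ball (f x) ε) := by
  ext A hA
  rw [hP ε hε x A hA, Measure.smul_apply, Measure.restrict_apply hA, smul_eq_mul,
    ENNReal.div_eq_inv_mul]

section Compact

variable [CompactSpace M]

theorem IsTransitionKernel.continuous {f : M → M} (hf : Continuous f) {m : Measure M}
    [IsFiniteMeasure m] {P : ℝ → M → ProbabilityMeasure M} (hP : IsTransitionKernel f m P)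
    {ε : ℝ} (hε : 0 < ε) (hball : ∀ z, 0 < m (ball z ε)) (hsph : ∀ z, m (sphere z ε) = 0) :
    Continuous (P ε) := by
  refine ProbabilityMeasure.continuous_iff_forall_continuousMap_continuous_integral.2 fun φ => ?_
  have hintegral : ∀ x, ∫ y, φ y ∂(P ε x : Measure M)
      = (m.real (ball (f x) ε))⁻¹ * ∫ y in ball (f x) ε, φ y ∂m := fun x => by
    rw [hP.toMeasure_eq hε, integral_smul_measure, ENNReal.toReal_inv, smul_eq_mul,
      measureReal_def]
  have hne : ∀ x, m.real (ball (f x) ε) ≠ 0 := fun x =>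
    (ENNReal.toReal_pos (hball (f x)).ne' (measure_ne_top m _)).ne'
  simp_rw [hintegral]
  exact (((continuous_measureReal_ball hsph).comp hf).inv₀ hne).mul
    ((continuous_setIntegral_ball ((BoundedContinuousFunction.mkOfCompact φ).integrable m)
      hsph).comp hf)

theorem IsDualTransfer.continuous {P : ℝ → M → ProbabilityMeasure M}
    {Lop : ℝ → ProbabilityMeasure M → ProbabilityMeasure M} (hL : IsDualTransfer P Lop)
    {ε : ℝ} (hε : 0 < ε) (hP : Continuous (P ε)) :
    Continuous (Lop ε) := by
  refine ProbabilityMeasure.continuous_iff_forall_continuousMap_continuous_integral.2 fun φ => ?_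
  have hg : Continuous fun x => ∫ y, φ y ∂(P ε x : Measure M) :=
    ProbabilityMeasure.continuous_iff_forall_continuousMap_continuous_integral.1 hP φ
  simp_rw [hL ε hε _ φ]
  exact ProbabilityMeasure.continuous_integral_continuousMap (⟨_, hg⟩ : C(M, ℝ))

end Compact

theorem statement_1 {M : Type*} [MetricSpace M] [CompactSpace M] [MeasurableSpace M]
    [BorelSpace M] (f : M → M) (hf : Continuous f)
    (m : Measure M) [IsFiniteMeasure m]
    (hball : ∀ (z : M) (r : ℝ), 0 < r → 0 < m (Metric.ball z r))
    (hsph : ∀ (z : M) (r : ℝ), m (Metric.sphere z r) = 0)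
    (P : ℝ → M → ProbabilityMeasure M) (hP : IsTransitionKernel f m P)
    (Lop : ℝ → ProbabilityMeasure M → ProbabilityMeasure M) (hL : IsDualTransfer P Lop) :
    ∀ ε > (0 : ℝ), Continuous (Lop ε) := fun ε hε =>
  hL.continuous hε (hP.continuous hf hε (fun z => hball z ε hε) fun z => hsph z ε)

end EmpStoch
end

section
/- For every fixed integer n ≥ 1, the iterated dual transfer operator applied to Dirac measures converges uniformly to the Dirac measure at the n-th iterate: for every ρ > 0 there exists ε₀ > 0 such that dist*((L*_ε)^n δ_x, δ_{f^n(x)}) < ρ for all 0 < ε ≤ ε₀ and all x ∈ M. -/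
open MeasureTheory Metric Set Filter Topology
open scoped ENNReal NNReal

namespace EmpStoch

variable {M : Type*} [MetricSpace M] [MeasurableSpace M] [BorelSpace M]

/-!
Because `p_ε(a,·)` lives on `B_ε(f a)` and `f` is uniformly continuous, induction on `n` shows
that `(L*_ε)^n δ_x` is concentrated on an arbitrarily small ball around `f^n x` once `ε` is small,
uniformly in `x`. Concentration on an open set is read off from the defining identity of `L*_ε`
by integrating a Urysohn function. A compactness argument then shows that every probability
measure concentrated on a small enough ball around `z` is `dist*`-close to `δ_z`, uniformly in
`z`: otherwise a sequence of such measures would converge weakly to some `δ_{z₀}` together with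
the Dirac measures at the moving centres while staying `ρ`-far from them.
-/

theorem ae_mem_of_integral_eq_one {X : Type*} [MeasurableSpace X] {ν : Measure X}
    [IsProbabilityMeasure ν] {U : Set X} (hU : MeasurableSet U) {φ : X → ℝ} (hφ₀ : 0 ≤ φ)
    (hφU : φ ≤ U.indicator 1) (hφ : ∫ y, φ y ∂ν = 1) : ∀ᵐ y ∂ν, y ∈ U := by
  have hU₁ : 1 ≤ ν.real U :=
    calc 1 = ∫ y, φ y ∂ν := hφ.symm
      _ ≤ ∫ y, U.indicator 1 y ∂ν :=
        integral_mono_of_nonneg (ae_of_all _ hφ₀) ((integrable_const 1).indicator hU)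
          (ae_of_all _ hφU)
      _ = ν.real U := integral_indicator_one hU
  refine mem_ae_iff.2 ((prob_compl_eq_zero_iff hU).2 ?_)
  rw [← ENNReal.toReal_eq_one_iff]
  exact le_antisymm measureReal_le_one hU₁

theorem IsTransitionKernel.ae_mem_ball {f : M → M} {m : Measure M}
    {P : ℝ → M → ProbabilityMeasure M} (hP : IsTransitionKernel f m P) {ε : ℝ} (hε : 0 < ε)
    (x : M) : ∀ᵐ y ∂(P ε x : Measure M), y ∈ ball (f x) ε := by
  change ball (f x) ε ∈ ae (P ε x : Measure M)
  refine mem_ae_iff.2 ?_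
  rw [hP ε hε x _ measurableSet_ball.compl, compl_inter_self, measure_empty, ENNReal.zero_div]

theorem IsDualTransfer.ae_mem_of_ae_ball_subset {f : M → M} {m : Measure M}
    {P : ℝ → M → ProbabilityMeasure M} {Lop : ℝ → ProbabilityMeasure M → ProbabilityMeasure M}
    (hL : IsDualTransfer P Lop) (hP : IsTransitionKernel f m P) {ε : ℝ} (hε : 0 < ε)
    {μ : ProbabilityMeasure M} {C U : Set M} (hC : IsClosed C) (hU : IsOpen U) (hCU : C ⊆ U)
    (hμ : ∀ᵐ a ∂(μ : Measure M), ball (f a) ε ⊆ C) :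
    ∀ᵐ y ∂(Lop ε μ : Measure M), y ∈ U := by
  obtain ⟨φ, hφU, hφC, hφ01⟩ := exists_continuous_zero_one_of_isClosed hU.isClosed_compl hC
    (disjoint_compl_left_iff_subset.2 hCU)
  have hinner : ∀ᵐ a ∂(μ : Measure M), ∫ y, φ y ∂(P ε a : Measure M) = 1 := by
    filter_upwards [hμ] with a ha
    rw [integral_congr_ae ((hP.ae_mem_ball hε a).mono fun y hy => hφC (ha hy))]
    simp
  refine ae_mem_of_integral_eq_one hU.measurableSet (fun y => (hφ01 y).1) (fun y => ?_) ?_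
  · by_cases hy : y ∈ U
    · simpa [hy] using (hφ01 y).2
    · simp [hy, hφU hy]
  · rw [hL ε hε μ φ, integral_congr_ae hinner]
    simp

theorem IsDualTransfer.exists_ae_dist_iterate_lt [CompactSpace M] {f : M → M} {m : Measure M}
    {P : ℝ → M → ProbabilityMeasure M} {Lop : ℝ → ProbabilityMeasure M → ProbabilityMeasure M}
    (hL : IsDualTransfer P Lop) (hf : Continuous f) (hP : IsTransitionKernel f m P) (n : ℕ)
    {η : ℝ} (hη : 0 < η) :
    ∃ ε₀ > (0 : ℝ), ∀ ε : ℝ, 0 < ε → ε ≤ ε₀ → ∀ x : M,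
      ∀ᵐ y ∂((Lop ε)^[n] (diracProb x) : Measure M), dist y (f^[n] x) < η := by
  induction n generalizing η with
  | zero =>
    refine ⟨1, one_pos, fun ε _ _ x => ?_⟩
    change ∀ᵐ y ∂(Measure.dirac x), dist y x < η
    rw [ae_dirac_eq]
    exact Filter.eventually_pure.2 (by simpa using hη)
  | succ n ih =>
    obtain ⟨r, hr, hfr⟩ := Metric.uniformContinuous_iff.1
      (CompactSpace.uniformContinuous_of_continuous hf) (η / 4) (by positivity)
    obtain ⟨ε₁, hε₁, hconc⟩ := ih hr
    refine ⟨min ε₁ (η / 4), by positivity, fun ε hε hεle x => ?_⟩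
    rw [Function.iterate_succ_apply', Function.iterate_succ_apply']
    refine hL.ae_mem_of_ae_ball_subset hP hε isClosed_closedBall isOpen_ball
      (closedBall_subset_ball (half_lt_self hη)) ?_
    filter_upwards [hconc ε hε (hεle.trans (min_le_left _ _)) x] with a ha y hy
    rw [mem_ball] at hy
    rw [mem_closedBall]
    linarith [hfr ha, dist_triangle y (f a) (f (f^[n] x)), min_le_right ε₁ (η / 4)]

theorem tendsto_diracProb_of_ae_dist_lt {ι : Type*} {l : Filter ι}
    {σ : ι → ProbabilityMeasure M} {z : M} {r : ι → ℝ} (hr : Tendsto r l (𝓝 0))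
    (hσ : ∀ i, ∀ᵐ y ∂(σ i : Measure M), dist y z < r i) :
    Tendsto σ l (𝓝 (diracProb z)) := by
  rw [ProbabilityMeasure.tendsto_iff_forall_integral_tendsto]
  intro g
  simp only [diracProb, ProbabilityMeasure.coe_mk, integral_dirac]
  rw [Metric.tendsto_nhds]
  intro τ hτ
  obtain ⟨s, hs, hgs⟩ := Metric.continuous_iff.1 g.continuous z (τ / 2) (half_pos hτ)
  filter_upwards [hr.eventually (gt_mem_nhds hs)] with i hi
  have hbound : ∀ᵐ y ∂(σ i : Measure M), ‖g y - g z‖ ≤ τ / 2 :=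
    (hσ i).mono fun y hy => (hgs y (hy.trans hi)).le
  calc dist (∫ y, g y ∂(σ i : Measure M)) (g z) = ‖∫ y, (g y - g z) ∂(σ i : Measure M)‖ := by
        rw [integral_sub (g.integrable _) (integrable_const _)]
        simp [dist_eq_norm]
    _ ≤ τ / 2 := by simpa using norm_integral_le_of_norm_le_const hbound
    _ < τ := half_lt_self hτ

theorem MetrizesWeakStar.eventually_lt {dstar : ProbabilityMeasure M → ProbabilityMeasure M → ℝ}
    (hd : MetrizesWeakStar dstar) {ι : Type*} {l : Filter ι} {σ : ι → ProbabilityMeasure M}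
    {μ : ProbabilityMeasure M} (h : Tendsto σ l (𝓝 μ)) {ρ : ℝ} (hρ : 0 < ρ) :
    ∀ᶠ i in l, dstar (σ i) μ < ρ :=
  h ((hd.2.2.2 μ _).2 ⟨ρ, hρ, subset_rfl⟩)

theorem MetrizesWeakStar.exists_dstar_diracProb_lt [CompactSpace M]
    {dstar : ProbabilityMeasure M → ProbabilityMeasure M → ℝ} (hd : MetrizesWeakStar dstar)
    {ρ : ℝ} (hρ : 0 < ρ) :
    ∃ δ > (0 : ℝ), ∀ (z : M) (σ : ProbabilityMeasure M),
      (∀ᵐ y ∂(σ : Measure M), dist y z < δ) → dstar σ (diracProb z) < ρ := by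
  by_contra! h
  choose z σ hσ hfar using fun k : ℕ => h (1 / ((k : ℝ) + 1)) Nat.one_div_pos_of_nat
  obtain ⟨z₀, ψ, hψ, hz⟩ := CompactSpace.tendsto_subseq z
  have hσz₀ : Tendsto (σ ∘ ψ) atTop (𝓝 (diracProb z₀)) := by
    refine tendsto_diracProb_of_ae_dist_lt
      (r := fun k => 1 / ((ψ k : ℝ) + 1) + dist (z (ψ k)) z₀) ?_ fun k => ?_
    · simpa using (tendsto_one_div_add_atTop_nhds_zero_nat.comp hψ.tendsto_atTop).add
        (tendsto_iff_dist_tendsto_zero.1 hz)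
    · filter_upwards [hσ (ψ k)] with y hy
      linarith [dist_triangle y (z (ψ k)) z₀]
  have hzz₀ : Tendsto (diracProb ∘ z ∘ ψ) atTop (𝓝 (diracProb z₀)) :=
    (continuous_diracProba.tendsto z₀).comp hz
  obtain ⟨k, hk₁, hk₂⟩ :=
    ((hd.eventually_lt hσz₀ (half_pos hρ)).and (hd.eventually_lt hzz₀ (half_pos hρ))).exists
  simp only [Function.comp_apply] at hk₁ hk₂
  linarith [hd.2.2.1 (σ (ψ k)) (diracProb z₀) (diracProb (z (ψ k))),
    hd.2.1 (diracProb z₀) (diracProb (z (ψ k))), hfar (ψ k)]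

theorem statement_4_general {M : Type*} [MetricSpace M] [CompactSpace M] [MeasurableSpace M]
    [BorelSpace M] (f : M → M) (hf : Continuous f)
    (m : Measure M)
    (P : ℝ → M → ProbabilityMeasure M) (hP : IsTransitionKernel f m P)
    (Lop : ℝ → ProbabilityMeasure M → ProbabilityMeasure M) (hL : IsDualTransfer P Lop)
    (dstar : ProbabilityMeasure M → ProbabilityMeasure M → ℝ) (hd : MetrizesWeakStar dstar) :
    ∀ n : ℕ, 1 ≤ n → ∀ ρ > (0 : ℝ), ∃ ε₀ > (0 : ℝ), ∀ ε : ℝ, 0 < ε → ε ≤ ε₀ →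
      ∀ x : M, dstar ((Lop ε)^[n] (diracProb x)) (diracProb (f^[n] x)) < ρ := by
  intro n _ ρ hρ
  obtain ⟨δ, hδ, hclose⟩ := hd.exists_dstar_diracProb_lt hρ
  obtain ⟨ε₀, hε₀, hconc⟩ := hL.exists_ae_dist_iterate_lt hf hP n hδ
  exact ⟨ε₀, hε₀, fun ε hε hεle x => hclose _ _ (hconc ε hε hεle x)⟩

theorem statement_4 {M : Type*} [MetricSpace M] [CompactSpace M] [MeasurableSpace M]
    [BorelSpace M] (f : M → M) (hf : Continuous f)
    (m : Measure M) [IsFiniteMeasure m]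
    (hball : ∀ (z : M) (r : ℝ), 0 < r → 0 < m (Metric.ball z r))
    (hsph : ∀ (z : M) (r : ℝ), m (Metric.sphere z r) = 0)
    (P : ℝ → M → ProbabilityMeasure M) (hP : IsTransitionKernel f m P)
    (Lop : ℝ → ProbabilityMeasure M → ProbabilityMeasure M) (hL : IsDualTransfer P Lop)
    (dstar : ProbabilityMeasure M → ProbabilityMeasure M → ℝ) (hd : MetrizesWeakStar dstar) :
    ∀ n : ℕ, 1 ≤ n → ∀ ρ > (0 : ℝ), ∃ ε₀ > (0 : ℝ), ∀ ε : ℝ, 0 < ε → ε ≤ ε₀ →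
      ∀ x : M, dstar ((Lop ε)^[n] (diracProb x)) (diracProb (f^[n] x)) < ρ :=
  statement_4_general f hf m P hP Lop hL dstar hd

end EmpStoch
end

section
/- A probability measure μ ∈ 𝓜 is empirically stochastically stable if and only if its basin of empiric stochastic stability Â_μ has positive m-measure. -/
open MeasureTheory Metric Set Filter Topology
open scoped ENNReal NNReal

namespace EmpStoch

variable {M : Type*} [MetricSpace M] [MeasurableSpace M] [BorelSpace M]

/-! Testing `σ_{ε,n,x}` against a continuous `φ` gives `n⁻¹ ∑_{j=1}^n (K_ε^j φ)(x)`, where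
`K_ε = ballAverage m f ε` averages over the ball `B_ε(f x)`. Since metric spheres are `m`-null, dominated convergence makes
every `K_ε^j φ` jointly continuous in `(ε, x)` for `ε > 0`, hence so is `(ε, x) ↦ σ_{ε,n,x}`.

Continuity in `ε` lets the almost-everywhere clause of stability be checked on rational `ε` only,
so a set `Â` witnessing stability lies in the basin `Â_μ` up to a null set. Conversely,
continuity in `x` makes the sets of points that are uniformly `ρ`-close for `ε ≤ ε₀` closed,
and an Egorov-type selection of thresholds, first `N` for every `ρ = 1/(k+1)` and then `ε₀` for
every pair `(ρ, n)`, carves out of `Â_μ` a set of positive measure with uniform thresholds. -/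

set_option linter.unusedSectionVars false

noncomputable def ballAverage (m : Measure M) (f : M → M) (ε : ℝ) (ψ : M → ℝ) (x : M) : ℝ :=
  ⨍ y in ball (f x) ε, ψ y ∂m

lemma abs_setAverage_le {α : Type*} [MeasurableSpace α] {m : Measure α} [IsFiniteMeasure m]
    {s : Set α} {ψ : α → ℝ} {C : ℝ} (hC : 0 ≤ C) (hψ : ∀ y, |ψ y| ≤ C) :
    |⨍ y in s, ψ y ∂m| ≤ C := by
  rw [setAverage_eq, smul_eq_mul, abs_mul, abs_inv, abs_of_nonneg measureReal_nonneg]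
  rcases eq_or_ne (m.real s) 0 with hs | hs
  · simpa [hs] using hC
  · rw [inv_mul_le_iff₀ (measureReal_nonneg.lt_of_ne' hs), mul_comm]
    exact norm_setIntegral_le_of_norm_le_const (measure_lt_top m s) fun y _ =>
      (Real.norm_eq_abs _).trans_le (hψ y)

section BallAverage

variable {m : Measure M} {f : M → M}

lemma abs_iterate_ballAverage_le [IsFiniteMeasure m] {φ : M → ℝ} {C : ℝ} (hC : 0 ≤ C)
    (hφ : ∀ y, |φ y| ≤ C) (ε : ℝ) (j : ℕ) (x : M) : |(ballAverage m f ε)^[j] φ x| ≤ C := by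
  induction j generalizing x with
  | zero => exact hφ x
  | succ j ih =>
    rw [Function.iterate_succ_apply']
    exact abs_setAverage_le hC ih

lemma ballAverage_eq_div (ε : ℝ) (ψ : M → ℝ) (x : M) :
    ballAverage m f ε ψ x =
      (∫ y, (ball (f x) ε).indicator ψ y ∂m) / ∫ y, (ball (f x) ε).indicator 1 y ∂m := by
  rw [ballAverage, setAverage_eq, integral_indicator measurableSet_ball,
    integral_indicator_one measurableSet_ball, smul_eq_mul, inv_mul_eq_div]

/-- Dominated convergence: as `(ε', x') → (ε, x)` the indicator of `ball (f x') ε'` converges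
to that of `ball (f x) ε` off the null sphere `sphere (f x) ε`. -/
lemma continuousAt_integral_indicator_ball [IsFiniteMeasure m] (hf : Continuous f)
    {ψ : ℝ → M → ℝ} {C : ℝ} (hψ : ∀ ε' > 0, ∀ y, ContinuousAt (Function.uncurry ψ) (ε', y))
    (hψC : ∀ ε' y, |ψ ε' y| ≤ C)
    {ε : ℝ} (hε : 0 < ε) {x : M} (hsph : m (sphere (f x) ε) = 0) :
    ContinuousAt (fun p : ℝ × M => ∫ y, (ball (f p.2) p.1).indicator (ψ p.1) y ∂m) (ε, x) := by
  have hC : 0 ≤ C := (abs_nonneg _).trans (hψC ε x)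
  have hpos : ∀ᶠ p : ℝ × M in 𝓝 (ε, x), 0 < p.1 :=
    continuousAt_fst.eventually (lt_mem_nhds hε)
  refine tendsto_integral_filter_of_dominated_convergence (fun _ => C) ?_ ?_
    (integrable_const C) ?_
  · filter_upwards [hpos] with p hp
    have : Continuous (ψ p.1) := continuous_iff_continuousAt.2 fun y =>
      (hψ p.1 hp y).comp (Continuous.prodMk_right p.1).continuousAt
    exact this.aestronglyMeasurable.indicator measurableSet_ball
  · refine Eventually.of_forall fun p => Eventually.of_forall fun y =>
      (norm_indicator_le_norm_self _ _).trans (hψC p.1 y)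
  · filter_upwards [measure_eq_zero_iff_ae_notMem.1 hsph] with y hy
    have hdist : Continuous fun p : ℝ × M => dist y (f p.2) :=
      continuous_const.dist (hf.comp continuous_snd)
    rcases lt_or_gt_of_ne (mt mem_sphere.2 hy) with hlt | hgt
    · have hin : ∀ᶠ p : ℝ × M in 𝓝 (ε, x), y ∈ ball (f p.2) p.1 :=
        (isOpen_lt hdist continuous_fst).mem_nhds hlt
      rw [indicator_of_mem (mem_ball.2 hlt)]
      refine ((hψ ε hε y).comp_of_eq
        (continuous_fst.prodMk continuous_const).continuousAt rfl).congr' ?_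
      filter_upwards [hin] with p hp
      exact (indicator_of_mem hp _).symm
    · have hgt' : ∀ᶠ p : ℝ × M in 𝓝 (ε, x), p.1 < dist y (f p.2) :=
        (isOpen_lt continuous_fst hdist).mem_nhds hgt
      have hout : ∀ᶠ p : ℝ × M in 𝓝 (ε, x), y ∉ ball (f p.2) p.1 :=
        hgt'.mono fun p hp => by simpa [mem_ball] using hp.le
      rw [indicator_of_notMem (by simpa [mem_ball] using hgt.le)]
      refine tendsto_const_nhds.congr' ?_
      filter_upwards [hout] with p hp
      exact (indicator_of_notMem hp _).symm

lemma continuousAt_ballAverage [IsFiniteMeasure m] (hf : Continuous f)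
    (hball : ∀ z, ∀ r > 0, 0 < m (ball z r)) (hsph : ∀ z r, m (sphere z r) = 0)
    {ψ : ℝ → M → ℝ} {C : ℝ} (hψ : ∀ ε' > 0, ∀ y, ContinuousAt (Function.uncurry ψ) (ε', y))
    (hψC : ∀ ε' y, |ψ ε' y| ≤ C) {ε : ℝ} (hε : 0 < ε) (x : M) :
    ContinuousAt (Function.uncurry fun ε => ballAverage m f ε (ψ ε)) (ε, x) := by
  simp only [Function.uncurry_def, ballAverage_eq_div]
  refine (continuousAt_integral_indicator_ball hf hψ hψC hε (hsph _ _)).div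
    (continuousAt_integral_indicator_ball (ψ := fun _ => 1) (C := 1) hf
      (fun _ _ _ => continuousAt_const) (fun _ _ => by simp) hε (hsph _ _)) ?_
  rw [integral_indicator_one measurableSet_ball]
  exact (measureReal_ne_zero_iff (measure_ne_top _ _)).2 (hball _ ε hε).ne'

lemma continuousAt_iterate_ballAverage [IsFiniteMeasure m] (hf : Continuous f)
    (hball : ∀ z, ∀ r > 0, 0 < m (ball z r)) (hsph : ∀ z r, m (sphere z r) = 0)
    {φ : M → ℝ} (hφ : Continuous φ) {C : ℝ} (hC : 0 ≤ C) (hφC : ∀ y, |φ y| ≤ C) (j : ℕ) :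
    ∀ ε > 0, ∀ x,
      ContinuousAt (Function.uncurry fun ε => (ballAverage m f ε)^[j] φ) (ε, x) := by
  induction j with
  | zero => exact fun _ _ _ => (hφ.comp continuous_snd).continuousAt
  | succ j ih =>
    simp only [Function.iterate_succ_apply']
    exact fun ε hε x => continuousAt_ballAverage hf hball hsph ih
      (fun ε' => abs_iterate_ballAverage_le hC hφC ε' j) hε x

lemma continuous_ballAverage [IsFiniteMeasure m] (hf : Continuous f)
    (hball : ∀ z, ∀ r > 0, 0 < m (ball z r)) (hsph : ∀ z r, m (sphere z r) = 0)
    {φ : M → ℝ} (hφ : Continuous φ) {C : ℝ} (hC : 0 ≤ C) (hφC : ∀ y, |φ y| ≤ C) {ε : ℝ}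
    (hε : 0 < ε) : Continuous (ballAverage m f ε φ) :=
  continuous_iff_continuousAt.2 fun x => by
    simpa [Function.comp_def] using
      (continuousAt_iterate_ballAverage hf hball hsph hφ hC hφC 1 ε hε x).comp
        (Continuous.prodMk_right ε).continuousAt

end BallAverage

section Operators

variable {f : M → M} {m : Measure M} {P : ℝ → M → ProbabilityMeasure M}
  {Lop : ℝ → ProbabilityMeasure M → ProbabilityMeasure M} {S : ℝ → ℕ → M → ProbabilityMeasure M}

lemma integral_transition (hP : IsTransitionKernel f m P) {ε : ℝ} (hε : 0 < ε) (x : M)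
    (ψ : M → ℝ) : ∫ y, ψ y ∂(P ε x : Measure M) = ballAverage m f ε ψ x := by
  have hPx : (P ε x : Measure M) = (m (ball (f x) ε))⁻¹ • m.restrict (ball (f x) ε) :=
    Measure.ext fun A hA => by
      rw [hP ε hε x A hA, Measure.smul_apply, Measure.restrict_apply hA, smul_eq_mul,
        ENNReal.div_eq_inv_mul]
  rw [hPx, ballAverage, setAverage_eq']

lemma integral_iterate_dualTransfer [CompactSpace M] [IsFiniteMeasure m] (hf : Continuous f)
    (hball : ∀ z, ∀ r > 0, 0 < m (ball z r)) (hsph : ∀ z r, m (sphere z r) = 0)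
    (hP : IsTransitionKernel f m P) (hL : IsDualTransfer P Lop) {ε : ℝ} (hε : 0 < ε) (x : M)
    (j : ℕ) (φ : C(M, ℝ)) :
    ∫ y, φ y ∂((Lop ε)^[j] (diracProb x) : Measure M) = (ballAverage m f ε)^[j] φ x := by
  induction j generalizing φ with
  | zero => exact integral_dirac _ x
  | succ j ih =>
    let ψ : C(M, ℝ) := ⟨ballAverage m f ε φ, continuous_ballAverage hf hball hsph φ.continuous
      (norm_nonneg φ) (fun y => by simpa using φ.norm_coe_le_norm y) hε⟩
    rw [Function.iterate_succ_apply', hL ε hε]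
    simp_rw [integral_transition hP hε]
    exact ih ψ

lemma integral_empiric [CompactSpace M] [IsFiniteMeasure m] (hf : Continuous f)
    (hball : ∀ z, ∀ r > 0, 0 < m (ball z r)) (hsph : ∀ z r, m (sphere z r) = 0)
    (hP : IsTransitionKernel f m P) (hL : IsDualTransfer P Lop) (hS : IsEmpiricStochastic Lop S)
    {ε : ℝ} (hε : 0 < ε) {n : ℕ} (hn : 1 ≤ n) (x : M) (φ : C(M, ℝ)) :
    ∫ y, φ y ∂(S ε n x : Measure M) =
      (n : ℝ)⁻¹ * ∑ j ∈ Finset.range n, (ballAverage m f ε)^[j + 1] φ x := by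
  have hφ : ∀ ν : Measure M, IsFiniteMeasure ν → Integrable φ ν := fun _ _ =>
    (BoundedContinuousFunction.mkOfCompact φ).integrable _
  rw [hS ε hε n hn x, integral_smul_measure,
    integral_finsetSum_measure fun j _ => hφ _ inferInstance]
  simp only [ENNReal.toReal_inv, ENNReal.toReal_natCast, smul_eq_mul,
    integral_iterate_dualTransfer hf hball hsph hP hL hε]

lemma continuousAt_empiric [CompactSpace M] [IsFiniteMeasure m] (hf : Continuous f)
    (hball : ∀ z, ∀ r > 0, 0 < m (ball z r)) (hsph : ∀ z r, m (sphere z r) = 0)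
    (hP : IsTransitionKernel f m P) (hL : IsDualTransfer P Lop) (hS : IsEmpiricStochastic Lop S)
    {n : ℕ} (hn : 1 ≤ n) {ε : ℝ} (hε : 0 < ε) (x : M) :
    ContinuousAt (Function.uncurry fun ε => S ε n) (ε, x) := by
  refine ProbabilityMeasure.tendsto_iff_forall_integral_tendsto.2 fun φ => ?_
  have hφC : ∀ y, |φ y| ≤ ‖φ‖ := fun y => by simpa using φ.norm_coe_le_norm y
  have hpos : ∀ᶠ p : ℝ × M in 𝓝 (ε, x), 0 < p.1 :=
    continuousAt_fst.eventually (lt_mem_nhds hε)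
  have hsum := tendsto_finsetSum (Finset.range n) fun j _ =>
    continuousAt_iterate_ballAverage (m := m) hf hball hsph φ.continuous (norm_nonneg φ) hφC
      (j + 1) ε hε x
  refine ((hsum.const_mul (n : ℝ)⁻¹).congr' ?_).trans_eq ?_
  · filter_upwards [hpos] with p hp
    exact (integral_empiric hf hball hsph hP hL hS hp hn p.2 φ.toContinuousMap).symm
  · exact congrArg 𝓝
      (integral_empiric hf hball hsph hP hL hS hε hn x φ.toContinuousMap).symm

end Operators

lemma exists_measure_inter_iInter_pos {α ι : Type*} [MeasurableSpace α] [Countable ι]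
    {m : Measure α} {s : Set α} (hs₀ : m s ≠ 0) (hs : m s ≠ ∞) {U : ι → ℕ → Set α}
    (hU : ∀ i j, MeasurableSet (U i j)) (hmono : ∀ i, Monotone (U i))
    (hcover : ∀ i, s ⊆ ⋃ j, U i j) : ∃ J : ι → ℕ, 0 < m (s ∩ ⋂ i, U i (J i)) := by
  obtain ⟨δ, hδ, hδs⟩ := ENNReal.exists_pos_sum_of_countable hs₀ ι
  have hJ : ∀ i, ∃ j, m (s \ U i j) < δ i := by
    intro i
    have hlim : Tendsto (fun j => m (s ∩ U i j)) atTop (𝓝 (m s)) := by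
      simpa [Function.comp_def, ← inter_iUnion, inter_eq_left.2 (hcover i)] using
        tendsto_measure_iUnion_atTop (μ := m) fun _ _ h =>
          inter_subset_inter_right s (hmono i h)
    obtain ⟨j, hj⟩ := ((hlim.add_const (δ i : ℝ≥0∞)).eventually_const_lt
      (ENNReal.lt_add_right hs (by simpa using (hδ i).ne'))).exists
    refine ⟨j, (ENNReal.add_lt_add_iff_left
      (measure_ne_top_of_subset (inter_subset_left (t := U i j)) hs)).1 ?_⟩
    rwa [measure_inter_add_sdiff s (hU i j)]
  choose J hJ using hJ
  refine ⟨J, pos_iff_ne_zero.2 fun h => (lt_irrefl (m s)) ?_⟩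
  calc m s ≤ m (s ∩ ⋂ i, U i (J i)) + m (s \ ⋂ i, U i (J i)) :=
        measure_le_inter_add_sdiff m _ _
    _ = m (⋃ i, s \ U i (J i)) := by rw [h, zero_add, sdiff_iInter]
    _ ≤ ∑' i, m (s \ U i (J i)) := measure_iUnion_le _
    _ ≤ ∑' i, (δ i : ℝ≥0∞) := ENNReal.tsum_le_tsum fun i => (hJ i).le
    _ < m s := hδs

lemma le_of_continuousAt_of_forall_rat_le {g : ℝ → ℝ} {ε ρ : ℝ} (hg : ContinuousAt g ε)
    (hε : 0 < ε) (h : ∀ q : ℚ, 0 < (q : ℝ) → (q : ℝ) ≤ ε → g q ≤ ρ) : g ε ≤ ρ := by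
  refine le_of_tendsto_of_frequently hg (frequently_iff.2 fun {U} hU => ?_)
  obtain ⟨a, b, ⟨ha, hb⟩, hab⟩ := mem_nhds_iff_exists_Ioo_subset.1 hU
  obtain ⟨q, hq, hqε⟩ := exists_rat_btwn (max_lt ha hε)
  exact ⟨q, hab ⟨(le_max_left _ _).trans_lt hq, hqε.trans hb⟩,
    h q ((le_max_right _ _).trans_lt hq) hqε.le⟩

lemma MetrizesWeakStar.tendsto_dstar {dstar : ProbabilityMeasure M → ProbabilityMeasure M → ℝ}
    (hd : MetrizesWeakStar dstar) {α : Type*} {l : Filter α} {F : α → ProbabilityMeasure M}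
    {σ : ProbabilityMeasure M} (hF : Tendsto F l (𝓝 σ)) (μ : ProbabilityMeasure M) :
    Tendsto (fun t => dstar (F t) μ) l (𝓝 (dstar σ μ)) := by
  obtain ⟨-, hsymm, htri, hnhds⟩ := hd
  refine Metric.tendsto_nhds.2 fun δ hδ => ?_
  filter_upwards [hF ((hnhds σ _).2 ⟨δ, hδ, subset_rfl⟩)] with t (ht : dstar (F t) σ < δ)
  rw [Real.dist_eq, abs_sub_lt_iff]
  constructor <;> linarith [htri (F t) σ μ, htri σ (F t) μ, hsymm σ (F t)]

section Stability

variable {m : Measure M} {dstar : ProbabilityMeasure M → ProbabilityMeasure M → ℝ}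
  {S : ℝ → ℕ → M → ProbabilityMeasure M} {μ : ProbabilityMeasure M}

def uniformlyCloseSet (dstar : ProbabilityMeasure M → ProbabilityMeasure M → ℝ)
    (S : ℝ → ℕ → M → ProbabilityMeasure M) (μ : ProbabilityMeasure M) (ρ : ℝ) (n : ℕ)
    (ε₀ : ℝ) : Set M :=
  {x | ∀ ε ∈ Ioc 0 ε₀, dstar (S ε n x) μ ≤ ρ}

lemma uniformlyCloseSet_anti {ρ : ℝ} {n : ℕ} : Antitone (uniformlyCloseSet dstar S μ ρ n) :=
  fun _ _ h _ hx ε hε => hx ε ⟨hε.1, hε.2.trans h⟩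

lemma isClosed_uniformlyCloseSet {ρ : ℝ} {n : ℕ}
    (hcont : ∀ ε > 0, Continuous fun x => dstar (S ε n x) μ) (ε₀ : ℝ) :
    IsClosed (uniformlyCloseSet dstar S μ ρ n ε₀) := by
  simp only [uniformlyCloseSet, ofPred_forall]
  exact isClosed_biInter fun ε hε => isClosed_le (hcont ε hε.1) continuous_const

lemma empBasin_subset_iUnion_uniformlyCloseSet (k : ℕ) :
    empBasin dstar S μ ⊆
      ⋃ N, ⋂ i, ⋃ j : ℕ, uniformlyCloseSet dstar S μ (1 / (k + 1)) (N + i + 1) (1 / (j + 1)) := by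
  intro x hx
  obtain ⟨N, hN⟩ := hx (1 / (k + 1)) Nat.one_div_pos_of_nat
  refine mem_iUnion.2 ⟨N, mem_iInter.2 fun i => ?_⟩
  obtain ⟨ε₀, hε₀, hε₀N⟩ := hN (N + i + 1) (by omega)
  obtain ⟨j, hj⟩ := exists_nat_one_div_lt hε₀
  exact mem_iUnion.2 ⟨j, fun ε hε => (hε₀N ε hε.1 (hε.2.trans hj.le)).le⟩

/-- The a.e. quantifier in `EmpStochStable` sits inside `∀ ε`; continuity in `ε` lets us pull
it out through a countable dense set of noise levels. -/
lemma EmpStochStable.measure_empBasin_pos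
    (hcont : ∀ n ≥ 1, ∀ x, ∀ ε > 0, ContinuousAt (fun ε => dstar (S ε n x) μ) ε)
    (h : EmpStochStable m dstar S μ) : 0 < m (empBasin dstar S μ) := by
  obtain ⟨A, -, hApos, hA⟩ := h
  choose N hN using fun k : ℕ => hA (1 / (k + 1)) Nat.one_div_pos_of_nat
  choose! ε₀ hε₀pos hε₀ using hN
  have hae : ∀ᵐ x ∂m, ∀ k n (q : ℚ), N k ≤ n → 0 < (q : ℝ) → (q : ℝ) ≤ ε₀ k n → x ∈ A →
      dstar (S q n x) μ < 1 / (k + 1) := by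
    simp only [ae_all_iff, eventually_imp_distrib_left]
    exact fun k n q hn hq hqε => hε₀ k n hn q hq hqε
  refine hApos.trans_le (measure_mono_ae ?_)
  filter_upwards [hae] with x hx hxA ρ hρ
  obtain ⟨k, hk⟩ := exists_nat_one_div_lt hρ
  refine ⟨max (N k) 1, fun n hn =>
    ⟨ε₀ k n, hε₀pos k n (le_of_max_le_left hn), fun ε hε hεε₀ => ?_⟩⟩
  refine (le_of_continuousAt_of_forall_rat_le (hcont n (le_of_max_le_right hn) x ε hε) hε
    fun q hq hqε => ?_).trans_lt hk
  exact (hx k n q (le_of_max_le_left hn) hq (hqε.trans hεε₀) hxA).le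

lemma empStochStable_of_measure_empBasin_pos [IsFiniteMeasure m]
    (hcont : ∀ n ≥ 1, ∀ ε > 0, Continuous fun x => dstar (S ε n x) μ)
    (hpos : 0 < m (empBasin dstar S μ)) : EmpStochStable m dstar S μ := by
  set D : ℕ → ℕ → ℕ → Set M := fun k n j =>
    uniformlyCloseSet dstar S μ (1 / (k + 1)) n (1 / (j + 1))
  have hD : ∀ k n j, MeasurableSet (D k (n + 1) j) := fun k n j =>
    (isClosed_uniformlyCloseSet (hcont _ (by omega)) _).measurableSet
  have hDmono : ∀ k n, Monotone (D k n) := fun k n _ _ h =>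
    uniformlyCloseSet_anti (Nat.one_div_le_one_div h)
  -- `N k`: a time threshold for accuracy `1/(k+1)`, uniform on a non-null part of the basin
  obtain ⟨N, hN⟩ := exists_measure_inter_iInter_pos hpos.ne' (measure_ne_top _ _)
    (U := fun k N => ⋂ i, ⋃ j, D k (N + i + 1) j)
    (fun k N => .iInter fun i => .iUnion fun j => hD _ _ _)
    (fun k N N' h x hx => mem_iInter.2 fun i => by
      simpa [show N + (N' - N + i) + 1 = N' + i + 1 by omega] using
        mem_iInter.1 hx (N' - N + i))
    empBasin_subset_iUnion_uniformlyCloseSet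
  -- `J (k, i)`: a noise threshold for accuracy `1/(k+1)` at time `N k + i + 1`
  obtain ⟨J, hJ⟩ := exists_measure_inter_iInter_pos hN.ne' (measure_ne_top _ _)
    (U := fun p : ℕ × ℕ => D p.1 (N p.1 + p.2 + 1)) (fun p j => hD _ _ _)
    (fun p => hDmono _ _) (fun p x hx => mem_iInter.1 (mem_iInter.1 hx.2 p.1) p.2)
  refine ⟨⋂ p : ℕ × ℕ, D p.1 (N p.1 + p.2 + 1) (J p),
    .iInter fun p => hD _ _ _, hJ.trans_le (measure_mono inter_subset_right),
    fun ρ hρ => ?_⟩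
  obtain ⟨k, hk⟩ := exists_nat_one_div_lt hρ
  refine ⟨N k + 1, fun n hn => ?_⟩
  obtain ⟨i, rfl⟩ : ∃ i, n = N k + i + 1 := ⟨n - (N k + 1), by omega⟩
  exact ⟨1 / (J (k, i) + 1), Nat.one_div_pos_of_nat, fun ε hε hεε₀ => .of_forall fun x hx =>
    (mem_iInter.1 hx (k, i) ε ⟨hε, hεε₀⟩).trans_lt hk⟩

end Stability

theorem statement_9 {M : Type*} [MetricSpace M] [CompactSpace M] [MeasurableSpace M]
    [BorelSpace M] (f : M → M) (hf : Continuous f)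
    (m : Measure M) [IsFiniteMeasure m]
    (hball : ∀ (z : M) (r : ℝ), 0 < r → 0 < m (Metric.ball z r))
    (hsph : ∀ (z : M) (r : ℝ), m (Metric.sphere z r) = 0)
    (P : ℝ → M → ProbabilityMeasure M) (hP : IsTransitionKernel f m P)
    (Lop : ℝ → ProbabilityMeasure M → ProbabilityMeasure M) (hL : IsDualTransfer P Lop)
    (S : ℝ → ℕ → M → ProbabilityMeasure M) (hS : IsEmpiricStochastic Lop S)
    (dstar : ProbabilityMeasure M → ProbabilityMeasure M → ℝ) (hd : MetrizesWeakStar dstar) :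
    ∀ μ : ProbabilityMeasure M,
      EmpStochStable m dstar S μ ↔ 0 < m (empBasin dstar S μ) := by
  intro μ
  have hjoint : ∀ n ≥ 1, ∀ ε > 0, ∀ x,
      ContinuousAt (Function.uncurry fun ε x => dstar (S ε n x) μ) (ε, x) :=
    fun n hn ε hε x => hd.tendsto_dstar (continuousAt_empiric hf hball hsph hP hL hS hn hε x) μ
  refine ⟨EmpStochStable.measure_empBasin_pos fun n hn x ε hε => ?_,
    empStochStable_of_measure_empBasin_pos fun n hn ε hε => ?_⟩
  · exact (hjoint n hn ε hε x).comp (f := fun ε' => (ε', x))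
      (Continuous.prodMk_left x).continuousAt
  · exact continuous_iff_continuousAt.2 fun x =>
      (hjoint n hn ε hε x).comp (Continuous.prodMk_right ε).continuousAt

end EmpStoch
end
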